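/- Let H be a finite-dimensional complex Hilbert space, C a subspace of H with orthogonal projection P, and E_1,…,E_l linear operators on H satisfying the Knill–Laflamme condition P E_a† E_{a'} P = λ_a δ_{aa'} P for some reals λ_a ≥ 0 and all a, a'. Then there exist linear operators R_0, R_1,…,R_l on H such that Σ_{b=0}^l R_b† R_b = 𝕀 and, for every v ∈ C and every a ∈ {1,…,l}, Σ_{b=0}^l R_b E_a |v⟩⟨v| E_a† R_b† = λ_a |v⟩⟨v|. Consequently, for every v ∈ C, Σ_{a=1}^l Σ_{b=0}^l R_b E_a |v⟩⟨v| E_a† R_b† = (Σ_{a=1}^l λ_a)·|v⟩⟨v|, i.e., the error operation (E_a)_a followed by the recovery operation (R_b)_b returns every state supported in C to a multiple of itself. -/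

import Mathlib

/-!
With `F_a = E_a P`, the Knill–Laflamme condition reads `F_a† F_{a'} = λ_a δ_{aa'} P`. Hence the
operators `R_a = λ_a^{-1/2} P E_a†` are partial isometries with mutually orthogonal ranges of
their adjoints, so `S = ∑_a R_a† R_a` is an orthogonal projection and `R_0 = 1 - S` completes
them to a trace-preserving family. For `v ∈ C` the vector `E_a v` lies in the range of `S`, so
`R_0` kills it, while `R_{a'} E_a v = δ_{aa'} √λ_a v`.
-/

/-- The rank-one operator `|u⟩⟨v| : w ↦ ⟨v, w⟩ • u` (inner product conjugate-linear
in the first argument). -/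
noncomputable def rankOne {H : Type*} [NormedAddCommGroup H] [InnerProductSpace ℂ H]
    (u v : H) : H →ₗ[ℂ] H where
  toFun w := (inner ℂ v w : ℂ) • u
  map_add' x y := by simp [inner_add_right, add_smul]
  map_smul' c x := by simp [inner_smul_right, smul_smul]

noncomputable def projOnto {H : Type*} [NormedAddCommGroup H] [InnerProductSpace ℂ H]
    [FiniteDimensional ℂ H] (C : Submodule ℂ H) : H →ₗ[ℂ] H :=
  C.subtype ∘ₗ (C.orthogonalProjection : H →L[ℂ] C).toLinearMap

open LinearMap (adjoint)

section RankOne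

variable {H : Type*} [NormedAddCommGroup H] [InnerProductSpace ℂ H]

@[simp]
lemma rankOne_apply (u v w : H) : rankOne u v w = inner ℂ v w • u := rfl

@[simp]
lemma rankOne_zero_left (v : H) : rankOne 0 v = 0 := by
  ext; simp

lemma rankOne_smul_smul (c d : ℂ) (u v : H) :
    rankOne (c • u) (d • v) = (starRingEnd ℂ d * c) • rankOne u v := by
  ext w
  simp only [rankOne_apply, LinearMap.smul_apply, inner_smul_left, smul_smul]
  ring_nf

lemma comp_rankOne (A : H →ₗ[ℂ] H) (u v : H) : A ∘ₗ rankOne u v = rankOne (A u) v := by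
  ext; simp

lemma rankOne_comp_adjoint [FiniteDimensional ℂ H] (A : H →ₗ[ℂ] H) (u v : H) :
    rankOne u v ∘ₗ adjoint A = rankOne u (A v) := by
  ext; simp [LinearMap.adjoint_inner_right]

end RankOne

section Projection

variable {H : Type*} [NormedAddCommGroup H] [InnerProductSpace ℂ H] [FiniteDimensional ℂ H]
  (C : Submodule ℂ H)

lemma isStarProjection_projOnto : IsStarProjection (projOnto C) :=
  LinearMap.isStarProjection_iff_isSymmetricProjection.mpr C.isSymmetricProjection_starProjection

lemma projOnto_apply_of_mem {v : H} (hv : v ∈ C) : projOnto C v = v :=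
  C.starProjection_eq_self_iff.mpr hv

lemma projOnto_comp_projOnto : projOnto C ∘ₗ projOnto C = projOnto C :=
  (isStarProjection_projOnto C).isIdempotentElem.eq

lemma adjoint_projOnto : adjoint (projOnto C) = projOnto C :=
  (isStarProjection_projOnto C).isSelfAdjoint

end Projection

section Kraus

variable {H : Type*} [NormedAddCommGroup H] [InnerProductSpace ℂ H] [FiniteDimensional ℂ H]
  {ι : Type*} [Fintype ι]

noncomputable def krausEffect (K : ι → H →ₗ[ℂ] H) : H →ₗ[ℂ] H :=
  ∑ i, adjoint (K i) ∘ₗ K i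

lemma isSelfAdjoint_krausEffect (K : ι → H →ₗ[ℂ] H) : IsSelfAdjoint (krausEffect K) :=
  isSelfAdjoint_sum _ fun i _ => IsSelfAdjoint.star_mul_self (K i)

lemma isStarProjection_krausEffect [DecidableEq ι] {K : ι → H →ₗ[ℂ] H}
    (hK : ∀ i j, K i ∘ₗ adjoint (K j) ∘ₗ K j = if i = j then K i else 0) :
    IsStarProjection (krausEffect K) := by
  refine ⟨?_, isSelfAdjoint_krausEffect K⟩
  show krausEffect K ∘ₗ krausEffect K = krausEffect K
  calc krausEffect K ∘ₗ krausEffect K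
      = ∑ i, adjoint (K i) ∘ₗ ∑ j, K i ∘ₗ adjoint (K j) ∘ₗ K j := by
        simp only [krausEffect, ← Module.End.mul_eq_comp]
        rw [Finset.sum_mul_sum]
        simp only [Finset.mul_sum, mul_assoc]
    _ = krausEffect K := by simp [hK, krausEffect]

noncomputable def krausCompletion {l : ℕ} (K : Fin l → H →ₗ[ℂ] H) : Fin (l + 1) → H →ₗ[ℂ] H :=
  Fin.cons (LinearMap.id - krausEffect K) K

lemma krausEffect_krausCompletion {l : ℕ} {K : Fin l → H →ₗ[ℂ] H}
    (hK : IsStarProjection (krausEffect K)) : krausEffect (krausCompletion K) = LinearMap.id := by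
  have hcompl : adjoint (LinearMap.id - krausEffect K) ∘ₗ (LinearMap.id - krausEffect K)
      = LinearMap.id - krausEffect K := by
    have h := hK.one_sub
    show star (1 - krausEffect K) * (1 - krausEffect K) = 1 - krausEffect K
    rw [h.isSelfAdjoint.star_eq]
    exact h.isIdempotentElem.eq
  rw [krausEffect, Fin.sum_univ_succ]
  simp only [krausCompletion, Fin.cons_zero, Fin.cons_succ]
  rw [hcompl]
  exact sub_add_cancel _ _

end Kraus

section Recovery

variable {H : Type*} [NormedAddCommGroup H] [InnerProductSpace ℂ H] [FiniteDimensional ℂ H]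
  (C : Submodule ℂ H)

/-- The paper's `R_a = λ_a^{-1/2} P E_a†`; when `λ_a = 0` the junk value `(√0)⁻¹ = 0` makes it
vanish, as the recovery requires. -/
noncomputable def recoveryKraus (E : H →ₗ[ℂ] H) (lam : ℝ) : H →ₗ[ℂ] H :=
  (((√lam)⁻¹ : ℝ) : ℂ) • (projOnto C ∘ₗ adjoint E)

lemma adjoint_recoveryKraus (E : H →ₗ[ℂ] H) (lam : ℝ) :
    adjoint (recoveryKraus C E lam) = (((√lam)⁻¹ : ℝ) : ℂ) • (E ∘ₗ projOnto C) := by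
  rw [recoveryKraus, LinearEquiv.map_smulₛₗ, Complex.conj_ofReal, LinearMap.adjoint_comp,
    LinearMap.adjoint_adjoint, adjoint_projOnto]

lemma projOnto_comp_recoveryKraus (E : H →ₗ[ℂ] H) (lam : ℝ) :
    projOnto C ∘ₗ recoveryKraus C E lam = recoveryKraus C E lam := by
  rw [recoveryKraus, LinearMap.comp_smul, ← LinearMap.comp_assoc, projOnto_comp_projOnto]

def IsKnillLaflamme {ι : Type*} [DecidableEq ι] (E : ι → H →ₗ[ℂ] H) (lam : ι → ℝ) : Prop :=
  ∀ a a', projOnto C ∘ₗ adjoint (E a) ∘ₗ E a' ∘ₗ projOnto C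
    = if a = a' then ((lam a : ℝ) : ℂ) • projOnto C else 0

variable {C} {ι : Type*} [DecidableEq ι] {E : ι → H →ₗ[ℂ] H} {lam : ι → ℝ}

lemma comp_projOnto_eq_zero_of_eq_zero
    (hKL : IsKnillLaflamme C E lam)
    {a : ι} (ha : lam a = 0) : E a ∘ₗ projOnto C = 0 := by
  have h : adjoint (E a ∘ₗ projOnto C) ∘ₗ (E a ∘ₗ projOnto C) = 0 := by
    simpa [LinearMap.adjoint_comp, adjoint_projOnto, LinearMap.comp_assoc, ha] using hKL a a
  rw [← LinearMap.ker_eq_top, ← LinearMap.ker_adjoint_comp_self, h, LinearMap.ker_zero]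

lemma recoveryKraus_comp_comp_projOnto
    (hKL : IsKnillLaflamme C E lam)
    (a' a : ι) :
    recoveryKraus C (E a') (lam a') ∘ₗ E a ∘ₗ projOnto C
      = if a' = a then ((√(lam a) : ℝ) : ℂ) • projOnto C else 0 := by
  rw [recoveryKraus, LinearMap.smul_comp, LinearMap.comp_assoc, hKL]
  split_ifs with h
  · subst h
    rw [smul_smul, ← Complex.ofReal_mul, inv_mul_eq_div, Real.div_sqrt]
  · exact smul_zero _

lemma recoveryKraus_comp_adjoint_comp_self
    (hKL : IsKnillLaflamme C E lam)
    (a a' : ι) :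
    recoveryKraus C (E a) (lam a) ∘ₗ adjoint (recoveryKraus C (E a') (lam a'))
        ∘ₗ recoveryKraus C (E a') (lam a')
      = if a = a' then recoveryKraus C (E a) (lam a) else 0 := by
  rw [adjoint_recoveryKraus, LinearMap.smul_comp, LinearMap.comp_smul, ← LinearMap.comp_assoc,
    recoveryKraus_comp_comp_projOnto hKL]
  split_ifs with h
  · subst h
    rw [LinearMap.smul_comp, projOnto_comp_recoveryKraus, smul_smul]
    conv_rhs => rw [recoveryKraus]
    rw [recoveryKraus, smul_smul]
    congr 1
    push_cast
    simpa using mul_inv_mul_cancel ((√(lam a) : ℂ))⁻¹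
  · simp

lemma krausEffect_comp_comp_projOnto [Fintype ι] (hlam : ∀ a, 0 ≤ lam a)
    (hKL : IsKnillLaflamme C E lam)
    (a : ι) :
    krausEffect (fun a' => recoveryKraus C (E a') (lam a')) ∘ₗ E a ∘ₗ projOnto C
      = E a ∘ₗ projOnto C := by
  calc krausEffect (fun a' => recoveryKraus C (E a') (lam a')) ∘ₗ E a ∘ₗ projOnto C
      = ∑ a', adjoint (recoveryKraus C (E a') (lam a'))
          ∘ₗ (recoveryKraus C (E a') (lam a') ∘ₗ E a ∘ₗ projOnto C) := by
        simp only [krausEffect, ← Module.End.mul_eq_comp, Finset.sum_mul, mul_assoc]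
    _ = adjoint (recoveryKraus C (E a) (lam a)) ∘ₗ (((√(lam a) : ℝ) : ℂ) • projOnto C) := by
        simp only [recoveryKraus_comp_comp_projOnto hKL]
        rw [Fintype.sum_eq_single a fun a' h => by rw [if_neg h, LinearMap.comp_zero], if_pos rfl]
    _ = (((√(lam a) * (√(lam a))⁻¹ : ℝ) : ℂ)) • (E a ∘ₗ projOnto C) := by
        rw [adjoint_recoveryKraus, LinearMap.comp_smul, LinearMap.smul_comp, LinearMap.comp_assoc,
          projOnto_comp_projOnto, smul_smul, ← Complex.ofReal_mul]
    _ = E a ∘ₗ projOnto C := by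
        rcases eq_or_ne (lam a) 0 with h | h
        · rw [comp_projOnto_eq_zero_of_eq_zero hKL h, smul_zero]
        · rw [mul_inv_cancel₀ (Real.sqrt_ne_zero'.mpr ((hlam a).lt_of_ne' h)), Complex.ofReal_one,
            one_smul]

lemma sum_krausCompletion_conj_rankOne {l : ℕ} {E : Fin l → H →ₗ[ℂ] H} {lam : Fin l → ℝ}
    (hlam : ∀ a, 0 ≤ lam a)
    (hKL : IsKnillLaflamme C E lam)
    {v : H} (hv : v ∈ C) (a : Fin l) :
    ∑ b, krausCompletion (fun a' => recoveryKraus C (E a') (lam a')) b ∘ₗ E a ∘ₗ rankOne v v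
        ∘ₗ adjoint (E a) ∘ₗ adjoint (krausCompletion (fun a' => recoveryKraus C (E a') (lam a')) b)
      = ((lam a : ℝ) : ℂ) • rankOne v v := by
  set R := krausCompletion (fun a' => recoveryKraus C (E a') (lam a'))
  have hEv : E a v = (E a ∘ₗ projOnto C) v := by
    rw [LinearMap.comp_apply, projOnto_apply_of_mem C hv]
  have hconj : ∀ b, R b ∘ₗ E a ∘ₗ rankOne v v ∘ₗ adjoint (E a) ∘ₗ adjoint (R b)
      = rankOne (R b (E a v)) (R b (E a v)) := fun b => by
    simp only [← LinearMap.comp_assoc, comp_rankOne, rankOne_comp_adjoint]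
  have hR0 : R 0 (E a v) = 0 := by
    rw [hEv, ← LinearMap.comp_apply]
    simp only [R, krausCompletion, Fin.cons_zero, LinearMap.sub_comp, LinearMap.id_comp,
      krausEffect_comp_comp_projOnto hlam hKL, sub_self, LinearMap.zero_apply]
  have hRsucc : ∀ a', rankOne (R a'.succ (E a v)) (R a'.succ (E a v))
      = if a' = a then ((lam a : ℝ) : ℂ) • rankOne v v else 0 := fun a' => by
    rw [hEv, ← LinearMap.comp_apply]
    simp only [R, krausCompletion, Fin.cons_succ, recoveryKraus_comp_comp_projOnto hKL]
    split_ifs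
    · rw [LinearMap.smul_apply, projOnto_apply_of_mem C hv, rankOne_smul_smul, Complex.conj_ofReal,
        ← Complex.ofReal_mul, Real.mul_self_sqrt (hlam a)]
    · simp
  simp only [hconj, Fin.sum_univ_succ, hR0, rankOne_zero_left, zero_add, hRsucc,
    Finset.sum_ite_eq', Finset.mem_univ, if_true]

end Recovery

/-- Sufficiency direction of the Knill–Laflamme theorem in the diagonal case: if the
error operators `E_1, …, E_l` on a finite-dimensional complex Hilbert space `H` satisfy
`P E_a† E_{a'} P = λ_a δ_{aa'} P` for the orthogonal projection `P` onto a subspace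
`C`, then there is a trace-preserving recovery operation `(R_b)_{b=0}^{l}` such that
for every `v ∈ C` and every `a`, `∑_b R_b E_a |v⟩⟨v| E_a† R_b† = λ_a |v⟩⟨v|`;
consequently `∑_a ∑_b R_b E_a |v⟩⟨v| E_a† R_b† = (∑_a λ_a) |v⟩⟨v|`. -/
theorem knill_laflamme_recovery_exists
    {H : Type*} [NormedAddCommGroup H] [InnerProductSpace ℂ H] [FiniteDimensional ℂ H]
    (C : Submodule ℂ H) (l : ℕ)
    (E : Fin l → (H →ₗ[ℂ] H))
    (lam : Fin l → ℝ) (hlam : ∀ a, 0 ≤ lam a)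
    (hKL : ∀ a a' : Fin l,
      projOnto C ∘ₗ LinearMap.adjoint (E a) ∘ₗ E a' ∘ₗ projOnto C
        = if a = a' then ((lam a : ℝ) : ℂ) • projOnto C else 0) :
    ∃ R : Fin (l + 1) → (H →ₗ[ℂ] H),
      (∑ b, LinearMap.adjoint (R b) ∘ₗ R b = LinearMap.id) ∧
      (∀ v ∈ C, ∀ a : Fin l,
        ∑ b, R b ∘ₗ E a ∘ₗ rankOne v v ∘ₗ LinearMap.adjoint (E a) ∘ₗ
            LinearMap.adjoint (R b)
          = ((lam a : ℝ) : ℂ) • rankOne v v) ∧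
      (∀ v ∈ C,
        ∑ a : Fin l, ∑ b, R b ∘ₗ E a ∘ₗ rankOne v v ∘ₗ LinearMap.adjoint (E a) ∘ₗ
            LinearMap.adjoint (R b)
          = ((∑ a, lam a : ℝ) : ℂ) • rankOne v v) := by
  have hS : IsStarProjection (krausEffect fun a => recoveryKraus C (E a) (lam a)) :=
    isStarProjection_krausEffect (recoveryKraus_comp_adjoint_comp_self hKL)
  have hrec := fun v (hv : v ∈ C) => sum_krausCompletion_conj_rankOne hlam hKL hv
  refine ⟨_, krausEffect_krausCompletion hS, hrec, fun v hv => ?_⟩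
  rw [Finset.sum_congr rfl fun a _ => hrec v hv a, ← Finset.sum_smul, Complex.ofReal_sum]
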